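/- As x → 0⁺, F(x) = (x³/√(2eπ)) e^{-1/(2x²)} (1 + O(x²)); that is, the function x ↦ (√(2eπ)/x³) · e^{1/(2x²)} · F(x) − 1 is O(x²) as x → 0⁺. -/

import Mathlib

open Real Set Filter

/-- Standard normal density. -/
noncomputable def stdNormalPDF (x : ℝ) : ℝ :=
  Real.exp (-x ^ 2 / 2) / Real.sqrt (2 * Real.pi)

/-- `F x = ∫_0^x φ(1/v + v/2) dv`. -/
noncomputable def F (x : ℝ) : ℝ :=
  ∫ v in (0 : ℝ)..x, stdNormalPDF (1 / v + v / 2)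

/-!
Completing the square, `√(2eπ) φ(1/v + v/2) = e^{-v²/8} e^{-1/(2v²)}`, while
`G(v) = v³ e^{-1/(2v²)}` has derivative `G'(v) = (1 + 3v²) e^{-1/(2v²)}`. On `(0, x]` the first
is therefore squeezed between `e^{-x²/8} / (1 + 3x²) · G'` and `G'`, and integrating gives
`e^{-x²/8} / (1 + 3x²) ≤ √(2eπ) F(x) / G(x) ≤ 1`, where the lower bound is at least
`1 - 4x²`.
-/

open MeasureTheory intervalIntegral

lemma ne_of_mem_Ioo_min_max {a b v : ℝ} (hv : v ∈ Ioo (min a b) (max a b)) : v ≠ a := by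
  rintro rfl
  simp only [mem_Ioo, min_lt_iff, lt_max_iff, lt_self_iff_false, false_or] at hv
  exact hv.1.not_gt hv.2

lemma stdNormalPDF_nonneg (y : ℝ) : 0 ≤ stdNormalPDF y := by
  unfold stdNormalPDF
  positivity

lemma stdNormalPDF_le (y : ℝ) : stdNormalPDF y ≤ (√(2 * π))⁻¹ := by
  rw [stdNormalPDF, div_eq_mul_inv]
  refine mul_le_of_le_one_left (by positivity) (exp_le_one_iff.2 ?_)
  have := sq_nonneg y
  linarith

lemma sqrt_mul_stdNormalPDF_one_div_add_half {v : ℝ} (hv : v ≠ 0) :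
    √(2 * exp 1 * π) * stdNormalPDF (1 / v + v / 2)
      = exp (-v ^ 2 / 8) * exp (-1 / (2 * v ^ 2)) := by
  have hsqrt : √(2 * exp 1 * π) = √(2 * π) * exp (1 / 2) := by
    rw [show 2 * exp 1 * π = 2 * π * exp 1 by ring, sqrt_mul (by positivity), exp_half]
  have hsq : 1 / 2 + -(1 / v + v / 2) ^ 2 / 2 = -v ^ 2 / 8 + -1 / (2 * v ^ 2) := by
    field_simp
    ring
  rw [hsqrt, stdNormalPDF, ← exp_add, ← hsq, exp_add]
  field_simp

noncomputable def leadingTerm (v : ℝ) : ℝ := v ^ 3 * exp (-1 / (2 * v ^ 2))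

noncomputable def leadingTermDeriv (v : ℝ) : ℝ := (1 + 3 * v ^ 2) * exp (-1 / (2 * v ^ 2))

lemma leadingTerm_eq_mul_expNegInvGlue (v : ℝ) :
    leadingTerm v = v ^ 3 * expNegInvGlue (2 * v ^ 2) := by
  rcases eq_or_ne v 0 with rfl | hv
  · simp [leadingTerm]
  · rw [leadingTerm, expNegInvGlue, if_neg (not_le.2 (by positivity)), neg_div, one_div]

lemma continuous_leadingTerm : Continuous leadingTerm := by
  rw [funext leadingTerm_eq_mul_expNegInvGlue]
  have := (expNegInvGlue.contDiff (n := 0)).continuous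
  fun_prop

lemma hasDerivAt_leadingTerm {v : ℝ} (hv : v ≠ 0) :
    HasDerivAt leadingTerm (leadingTermDeriv v) v := by
  have hexponent : HasDerivAt (fun w => -1 / (2 * w ^ 2)) (1 / v ^ 3) v := by
    refine ((hasDerivAt_const v (-1 : ℝ)).div ((hasDerivAt_pow 2 v).const_mul 2)
      (by positivity)).congr_deriv ?_
    field_simp
    ring
  refine ((hasDerivAt_pow 3 v).mul hexponent.exp).congr_deriv ?_
  rw [leadingTermDeriv]
  field_simp
  ring

lemma leadingTermDeriv_nonneg (v : ℝ) : 0 ≤ leadingTermDeriv v := by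
  unfold leadingTermDeriv
  positivity

lemma intervalIntegrable_leadingTermDeriv (x : ℝ) :
    IntervalIntegrable leadingTermDeriv volume 0 x :=
  intervalIntegrable_deriv_of_nonneg continuous_leadingTerm.continuousOn
    (fun _ hv => hasDerivAt_leadingTerm (ne_of_mem_Ioo_min_max hv))
    (fun v _ => leadingTermDeriv_nonneg v)

lemma integral_leadingTermDeriv (x : ℝ) :
    ∫ v in (0 : ℝ)..x, leadingTermDeriv v = leadingTerm x := by
  rw [integral_eq_sub_of_hasDeriv_right continuous_leadingTerm.continuousOn
    (fun _ hv => (hasDerivAt_leadingTerm (ne_of_mem_Ioo_min_max hv)).hasDerivWithinAt)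
    (intervalIntegrable_leadingTermDeriv x)]
  simp [leadingTerm]

lemma sqrt_mul_stdNormalPDF_le {v : ℝ} (hv : v ≠ 0) :
    √(2 * exp 1 * π) * stdNormalPDF (1 / v + v / 2) ≤ leadingTermDeriv v := by
  rw [sqrt_mul_stdNormalPDF_one_div_add_half hv, leadingTermDeriv]
  refine mul_le_mul_of_nonneg_right ?_ (exp_pos _).le
  have := exp_le_one_iff.2 (by nlinarith : -v ^ 2 / 8 ≤ 0)
  nlinarith

lemma le_sqrt_mul_stdNormalPDF {v x : ℝ} (hv : v ≠ 0) (hvx : v ^ 2 ≤ x ^ 2) :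
    exp (-x ^ 2 / 8) / (1 + 3 * x ^ 2) * leadingTermDeriv v
      ≤ √(2 * exp 1 * π) * stdNormalPDF (1 / v + v / 2) := by
  rw [sqrt_mul_stdNormalPDF_one_div_add_half hv, leadingTermDeriv, ← mul_assoc]
  refine mul_le_mul_of_nonneg_right ?_ (exp_pos _).le
  calc exp (-x ^ 2 / 8) / (1 + 3 * x ^ 2) * (1 + 3 * v ^ 2) ≤ exp (-x ^ 2 / 8) := by
        rw [div_mul_eq_mul_div, div_le_iff₀ (by positivity)]
        gcongr
    _ ≤ exp (-v ^ 2 / 8) := exp_le_exp.2 (by linarith)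

lemma intervalIntegrable_stdNormalPDF_one_div_add_half (x : ℝ) :
    IntervalIntegrable (fun v => stdNormalPDF (1 / v + v / 2)) volume 0 x := by
  refine (intervalIntegrable_const (c := (√(2 * π))⁻¹)).mono_fun' ?_ (ae_of_all _ fun v => ?_)
  · unfold stdNormalPDF
    fun_prop
  · exact (norm_of_nonneg (stdNormalPDF_nonneg _)).trans_le (stdNormalPDF_le _)

lemma sqrt_mul_F_le {x : ℝ} (hx : 0 ≤ x) : √(2 * exp 1 * π) * F x ≤ leadingTerm x := by
  rw [F, ← intervalIntegral.integral_const_mul, ← integral_leadingTermDeriv]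
  exact integral_mono_on_of_le_Ioo hx
    ((intervalIntegrable_stdNormalPDF_one_div_add_half x).const_mul _)
    (intervalIntegrable_leadingTermDeriv x) fun v hv => sqrt_mul_stdNormalPDF_le hv.1.ne'

lemma le_sqrt_mul_F {x : ℝ} (hx : 0 ≤ x) :
    exp (-x ^ 2 / 8) / (1 + 3 * x ^ 2) * leadingTerm x ≤ √(2 * exp 1 * π) * F x := by
  rw [F, ← intervalIntegral.integral_const_mul, ← integral_leadingTermDeriv,
    ← intervalIntegral.integral_const_mul]
  exact integral_mono_on_of_le_Ioo hx
    ((intervalIntegrable_leadingTermDeriv x).const_mul _)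
    ((intervalIntegrable_stdNormalPDF_one_div_add_half x).const_mul _)
    fun v hv => le_sqrt_mul_stdNormalPDF hv.1.ne' (pow_le_pow_left₀ hv.1.le hv.2.le 2)

lemma one_sub_four_mul_sq_le (x : ℝ) : 1 - 4 * x ^ 2 ≤ exp (-x ^ 2 / 8) / (1 + 3 * x ^ 2) := by
  rw [le_div_iff₀ (by positivity)]
  have := add_one_le_exp (-x ^ 2 / 8)
  nlinarith [sq_nonneg x, sq_nonneg (x ^ 2)]

/-- `F(x) = (x³/√(2eπ)) e^{-1/(2x²)} (1 + O(x²))` as `x → 0⁺`. -/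
theorem F_asymptotics :
    (fun x : ℝ =>
        Real.sqrt (2 * Real.exp 1 * Real.pi) / x ^ 3 * Real.exp (1 / (2 * x ^ 2)) *
          F x - 1)
      =O[nhdsWithin 0 (Set.Ioi 0)] (fun x : ℝ => x ^ 2) := by
  refine Asymptotics.IsBigO.of_bound 4 ?_
  filter_upwards [self_mem_nhdsWithin] with x (hx : 0 < x)
  have hG : 0 < leadingTerm x := by
    unfold leadingTerm
    positivity
  have hratio : √(2 * exp 1 * π) / x ^ 3 * exp (1 / (2 * x ^ 2)) * F x
      = √(2 * exp 1 * π) * F x / leadingTerm x := by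
    rw [leadingTerm, show 1 / (2 * x ^ 2) = -(-1 / (2 * x ^ 2)) by ring, exp_neg]
    field_simp
  have hupper := (div_le_one hG).2 (sqrt_mul_F_le hx.le)
  have hlower := (le_div_iff₀ hG).2 (le_sqrt_mul_F hx.le)
  have hquadratic := one_sub_four_mul_sq_le x
  rw [hratio, norm_of_nonneg (sq_nonneg x), Real.norm_eq_abs, abs_le]
  constructor <;> linarith
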